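/- Let q ∈ K be a primitive l-th root of unity (l ≥ 1) in a field K of characteristic zero, and let ψ ∈ lie(x,y) be homogeneous of weight 2n with l dividing 2n, such that every monomial of ψ has y-degree at least 2k for some natural number k < n, and such that ψ satisfies the antisymmetry relation ψ(x,y) = -ψ(y,x) and the hexagon relation ψ(x,y) + ψ(y,z) + ψ(z,x) = 0 under the substitution z = -x-y. Let ν(ψ) = (ψ(-x-y, x), ψ(-x-y, y)) be the associated tangential derivation. Then the bidegree (2n-2k, 2k) component (x-degree 2n-2k, y-degree 2k) of qdiv(ν(ψ)) equals qtr( y·∂_y ( ψ^{(2n-2k, 2k)} ) ), where ψ^{(2n-2k, 2k)} is the bidegree (2n-2k, 2k) component of ψ. -/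

import Mathlib

/-!
Antisymmetry turns the middle term of the hexagon relation into `-ψ(-x-y, y)`, so
`a = ψ(-x-y, x) = ψ(-x-y, y) - ψ = b - ψ`. The substitution `x ↦ -x-y` never lowers the
`y`-degree of a word: it sends a word to `(-1)^(x-degree)` times itself plus words of strictly
higher `y`-degree. As `ψ` has depth `2k`, the bidegree `(2n-2k, 2k)` components of `b` and `ψ`
therefore agree. Finally, `z ↦ x·∂_x z` and `z ↦ y·∂_y z` send every word to `0` or to a word of
the same bidegree, so they commute with the bidegree projections, and the difference in question
vanishes already in the free algebra.
-/

noncomputable section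

attribute [local instance 100] LieRing.ofAssociativeRing

/-- The bidegree `(p, t)` projection of the free associative algebra on two generators:
keep only the words with exactly `p` letters `x = ι 0` and `t` letters `y = ι 1`. -/
def bidegProj (K : Type*) [CommRing K] (p t : ℕ) (z : FreeAlgebra K (Fin 2)) :
    FreeAlgebra K (Fin 2) :=
  ((FreeAlgebra.basisFreeMonoid K (Fin 2)).repr z).sum fun w c =>
    if (FreeMonoid.toList w).count (0 : Fin 2) = p ∧ (FreeMonoid.toList w).count 1 = t
    then c • FreeAlgebra.basisFreeMonoid K (Fin 2) w else 0

theorem FreeMonoid.mul_of_ne_mul_of {X : Type*} {i j : X} (hij : i ≠ j) (v w : FreeMonoid X) :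
    v * .of i ≠ w * .of j := by
  intro h
  have h' := congrArg FreeMonoid.toList h
  simp only [FreeMonoid.toList_mul, FreeMonoid.toList_of] at h'
  simpa [hij] using (List.append_inj' h' rfl).2

namespace FreeAlgebra

theorem lift_lift_apply {R X Y A : Type*} [CommSemiring R] [Semiring A] [Algebra R A]
    (f : Y → A) (g : X → FreeAlgebra R Y) (z : FreeAlgebra R X) :
    lift R f (lift R g z) = lift R (lift R f ∘ g) z := by
  rw [← AlgHom.comp_apply]
  congr 1
  ext i
  simp

variable {K : Type*} [CommRing K]

theorem basisFreeMonoid_apply {X : Type*} (w : FreeMonoid X) :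
    basisFreeMonoid K X w = FreeMonoid.lift (ι K) w := by
  simp [basisFreeMonoid, equivMonoidAlgebraFreeMonoid]

theorem basisFreeMonoid_mul {X : Type*} (v w : FreeMonoid X) :
    basisFreeMonoid K X (v * w) = basisFreeMonoid K X v * basisFreeMonoid K X w := by
  simp [basisFreeMonoid_apply]

theorem basisFreeMonoid_of {X : Type*} (i : X) : basisFreeMonoid K X (.of i) = ι K i := by
  simp [basisFreeMonoid_apply]

theorem basisFreeMonoid_one {X : Type*} : basisFreeMonoid K X 1 = 1 := by
  simp [basisFreeMonoid_apply]

theorem eq_of_algebraMap_add_mul_ι_add_mul_ι {c c' : K} {u u' v v' : FreeAlgebra K (Fin 2)}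
    (h : algebraMap K _ c + u * ι K 0 + v * ι K 1 =
      algebraMap K _ c' + u' * ι K 0 + v' * ι K 1) :
    u = u' ∧ v = v' := by
  have hcoeff : ∀ i w, (equivMonoidAlgebraFreeMonoid (![u, v] i)).coeff w =
      (equivMonoidAlgebraFreeMonoid (![u', v'] i)).coeff w := by
    intro i w
    have hw := congrArg (fun z => (equivMonoidAlgebraFreeMonoid z).coeff (w * .of i)) h
    fin_cases i <;> simpa [equivMonoidAlgebraFreeMonoid, FreeMonoid.mul_of_ne_mul_of] using hw
  have hi : ∀ i, ![u, v] i = ![u', v'] i := fun i => equivMonoidAlgebraFreeMonoid.injective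
    (MonoidAlgebra.coeff_injective (Finsupp.ext (hcoeff i)))
  exact ⟨hi 0, hi 1⟩

local notation "𝔅" => basisFreeMonoid K (Fin 2)

theorem bidegProj_basisFreeMonoid (p t : ℕ) (w : FreeMonoid (Fin 2)) :
    bidegProj K p t (𝔅 w) =
      if w.toList.count 0 = p ∧ w.toList.count 1 = t then 𝔅 w else 0 := by
  rw [bidegProj, Module.Basis.repr_self, Finsupp.sum_single_index] <;> simp

def bidegProjₗ (K : Type*) [CommRing K] (p t : ℕ) :
    FreeAlgebra K (Fin 2) →ₗ[K] FreeAlgebra K (Fin 2) :=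
  (basisFreeMonoid K (Fin 2)).constr K fun w =>
    if w.toList.count 0 = p ∧ w.toList.count 1 = t then basisFreeMonoid K (Fin 2) w else 0

theorem coe_bidegProjₗ (p t : ℕ) : ⇑(bidegProjₗ K p t) = bidegProj K p t := by
  ext z
  simp [bidegProjₗ, Module.Basis.constr_apply, bidegProj, smul_ite]

theorem bidegProj_algebraMap (p t : ℕ) (c : K) :
    bidegProj K p t (algebraMap K _ c) = algebraMap K _ (if p = 0 ∧ t = 0 then c else 0) := by
  rw [Algebra.algebraMap_eq_smul_one, ← basisFreeMonoid_one, ← coe_bidegProjₗ, map_smul,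
    coe_bidegProjₗ, bidegProj_basisFreeMonoid]
  split_ifs <;> simp_all [eq_comm, basisFreeMonoid_one, Algebra.algebraMap_eq_smul_one]

theorem repr_bidegProj (p t : ℕ) (z : FreeAlgebra K (Fin 2)) (w : FreeMonoid (Fin 2)) :
    (𝔅).repr (bidegProj K p t z) w =
      if w.toList.count 0 = p ∧ w.toList.count 1 = t then (𝔅).repr z w else 0 := by
  have key : Finsupp.lapply w ∘ₗ (𝔅).repr.toLinearMap ∘ₗ bidegProjₗ K p t =
      if w.toList.count 0 = p ∧ w.toList.count 1 = t then
        Finsupp.lapply w ∘ₗ (𝔅).repr.toLinearMap else 0 := by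
    refine (𝔅).ext fun v => ?_
    obtain rfl | hvw := eq_or_ne v w
    · split_ifs <;> simp [coe_bidegProjₗ, bidegProj_basisFreeMonoid, *]
    · split_ifs <;> simp [coe_bidegProjₗ, bidegProj_basisFreeMonoid, apply_ite,
        Finsupp.single_eq_of_ne' hvw]
  have hz := LinearMap.congr_fun key z
  split_ifs at hz ⊢ <;> simpa [coe_bidegProjₗ] using hz

theorem bidegProj_mul_basisFreeMonoid (p t : ℕ) (u : FreeAlgebra K (Fin 2))
    (v : FreeMonoid (Fin 2)) :
    bidegProj K p t (u * 𝔅 v) =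
      (if v.toList.count 0 ≤ p ∧ v.toList.count 1 ≤ t then
        bidegProj K (p - v.toList.count 0) (t - v.toList.count 1) u else 0) * 𝔅 v := by
  have key : bidegProjₗ K p t ∘ₗ LinearMap.mulRight K (𝔅 v) =
      LinearMap.mulRight K (𝔅 v) ∘ₗ if v.toList.count 0 ≤ p ∧ v.toList.count 1 ≤ t then
        bidegProjₗ K (p - v.toList.count 0) (t - v.toList.count 1) else 0 := by
    refine (𝔅).ext fun w => ?_
    split_ifs <;>
      simp only [LinearMap.comp_apply, LinearMap.mulRight_apply, LinearMap.zero_apply, zero_mul,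
        coe_bidegProjₗ, ← basisFreeMonoid_mul, bidegProj_basisFreeMonoid, FreeMonoid.toList_mul,
        List.count_append] <;>
      split_ifs <;> first | (exfalso; omega) | simp [basisFreeMonoid_mul]
  have hu := LinearMap.congr_fun key u
  split_ifs at hu ⊢ <;> simpa [coe_bidegProjₗ] using hu

theorem bidegProj_basisFreeMonoid_mul (p t : ℕ) (v : FreeMonoid (Fin 2))
    (u : FreeAlgebra K (Fin 2)) :
    bidegProj K p t (𝔅 v * u) =
      𝔅 v * if v.toList.count 0 ≤ p ∧ v.toList.count 1 ≤ t then
        bidegProj K (p - v.toList.count 0) (t - v.toList.count 1) u else 0 := by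
  have key : bidegProjₗ K p t ∘ₗ LinearMap.mulLeft K (𝔅 v) =
      LinearMap.mulLeft K (𝔅 v) ∘ₗ if v.toList.count 0 ≤ p ∧ v.toList.count 1 ≤ t then
        bidegProjₗ K (p - v.toList.count 0) (t - v.toList.count 1) else 0 := by
    refine (𝔅).ext fun w => ?_
    split_ifs <;>
      simp only [LinearMap.comp_apply, LinearMap.mulLeft_apply, LinearMap.zero_apply, mul_zero,
        coe_bidegProjₗ, ← basisFreeMonoid_mul, bidegProj_basisFreeMonoid, FreeMonoid.toList_mul,
        List.count_append] <;>
      split_ifs <;> first | (exfalso; omega) | simp [basisFreeMonoid_mul]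
  have hu := LinearMap.congr_fun key u
  split_ifs at hu ⊢ <;> simpa [coe_bidegProjₗ] using hu

theorem bidegProj_mul_ι_zero (p t : ℕ) (u : FreeAlgebra K (Fin 2)) :
    bidegProj K p t (u * ι K 0) = (if 1 ≤ p then bidegProj K (p - 1) t u else 0) * ι K 0 := by
  simpa [basisFreeMonoid_of, ite_mul] using bidegProj_mul_basisFreeMonoid p t u (.of 0)

theorem bidegProj_mul_ι_one (p t : ℕ) (u : FreeAlgebra K (Fin 2)) :
    bidegProj K p t (u * ι K 1) = (if 1 ≤ t then bidegProj K p (t - 1) u else 0) * ι K 1 := by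
  simpa [basisFreeMonoid_of, ite_mul] using bidegProj_mul_basisFreeMonoid p t u (.of 1)

theorem bidegProj_ι_zero_mul (p t : ℕ) (u : FreeAlgebra K (Fin 2)) :
    bidegProj K p t (ι K 0 * u) = ι K 0 * if 1 ≤ p then bidegProj K (p - 1) t u else 0 := by
  simpa [basisFreeMonoid_of, mul_ite] using bidegProj_basisFreeMonoid_mul p t (.of 0) u

theorem bidegProj_ι_one_mul (p t : ℕ) (u : FreeAlgebra K (Fin 2)) :
    bidegProj K p t (ι K 1 * u) = ι K 1 * if 1 ≤ t then bidegProj K p (t - 1) u else 0 := by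
  simpa [basisFreeMonoid_of, mul_ite] using bidegProj_basisFreeMonoid_mul p t (.of 1) u

def IsPartialDerivs (ε : FreeAlgebra K (Fin 2) → K)
    (dx dy : FreeAlgebra K (Fin 2) → FreeAlgebra K (Fin 2)) : Prop :=
  ∀ z, z = algebraMap K _ (ε z) + dx z * ι K 0 + dy z * ι K 1

namespace IsPartialDerivs

variable {ε : FreeAlgebra K (Fin 2) → K} {dx dy : FreeAlgebra K (Fin 2) → FreeAlgebra K (Fin 2)}

theorem dx_eq_and_dy_eq (hd : IsPartialDerivs ε dx dy)
    {z u v : FreeAlgebra K (Fin 2)} {c : K}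
    (h : z = algebraMap K _ c + u * ι K 0 + v * ι K 1) : dx z = u ∧ dy z = v :=
  eq_of_algebraMap_add_mul_ι_add_mul_ι ((hd z).symm.trans h)

theorem bidegProj_eq (hd : IsPartialDerivs ε dx dy) (p t : ℕ) (z : FreeAlgebra K (Fin 2)) :
    bidegProj K p t z = algebraMap K _ (if p = 0 ∧ t = 0 then ε z else 0) +
      (if 1 ≤ p then bidegProj K (p - 1) t (dx z) else 0) * ι K 0 +
      (if 1 ≤ t then bidegProj K p (t - 1) (dy z) else 0) * ι K 1 := by
  conv_lhs => rw [hd z]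
  rw [← coe_bidegProjₗ, map_add, map_add, coe_bidegProjₗ, bidegProj_algebraMap,
    bidegProj_mul_ι_zero, bidegProj_mul_ι_one]

theorem bidegProj_ι_zero_mul_dx (hd : IsPartialDerivs ε dx dy) (p t : ℕ)
    (z : FreeAlgebra K (Fin 2)) :
    bidegProj K p t (ι K 0 * dx z) = ι K 0 * dx (bidegProj K p t z) := by
  rw [(hd.dx_eq_and_dy_eq (hd.bidegProj_eq p t z)).1, bidegProj_ι_zero_mul]

theorem bidegProj_ι_one_mul_dy (hd : IsPartialDerivs ε dx dy) (p t : ℕ)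
    (z : FreeAlgebra K (Fin 2)) :
    bidegProj K p t (ι K 1 * dy z) = ι K 1 * dy (bidegProj K p t z) := by
  rw [(hd.dx_eq_and_dy_eq (hd.bidegProj_eq p t z)).2, bidegProj_ι_one_mul]

end IsPartialDerivs

variable (K) in
def substNegSum : FreeAlgebra K (Fin 2) →ₐ[K] FreeAlgebra K (Fin 2) :=
  lift K ![-ι K 0 - ι K 1, ι K 1]

theorem bidegProj_substNegSum_basisFreeMonoid (w : FreeMonoid (Fin 2)) (p t : ℕ)
    (ht : t ≤ w.toList.count 1) :
    bidegProj K p t (substNegSum K (𝔅 w)) = (-1 : K) ^ p • bidegProj K p t (𝔅 w) := by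
  induction w using FreeMonoid.inductionOn' generalizing p t with
  | one =>
    obtain rfl : t = 0 := by simpa using ht
    rw [basisFreeMonoid_one, map_one, ← basisFreeMonoid_one, bidegProj_basisFreeMonoid]
    split_ifs with hp
    · simp [← hp.1]
    · simp
  | of_mul i w ih =>
    rw [basisFreeMonoid_mul, basisFreeMonoid_of, map_mul, substNegSum, lift_ι_apply,
      ← substNegSum]
    fin_cases i
    · replace ht : t ≤ w.toList.count 1 := by simpa using ht
      simp only [Fin.zero_eta, Fin.isValue, Matrix.cons_val_zero]
      rw [sub_mul, neg_mul, ← coe_bidegProjₗ, map_sub, map_neg, coe_bidegProjₗ,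
        bidegProj_ι_zero_mul, bidegProj_ι_one_mul, bidegProj_ι_zero_mul]
      have hy : (if 1 ≤ t then bidegProj K p (t - 1) (substNegSum K (𝔅 w)) else 0) = 0 := by
        split_ifs
        · rw [ih _ _ (by omega), bidegProj_basisFreeMonoid, if_neg (by omega), smul_zero]
        · rfl
      rw [hy, mul_zero, sub_zero]
      rcases p with _ | p
      · simp
      · simp [ih p t ht, pow_succ]
    · replace ht : t ≤ w.toList.count 1 + 1 := by simpa using ht
      simp only [Fin.mk_one, Fin.isValue, Matrix.cons_val_one, Matrix.cons_val_fin_one]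
      rw [bidegProj_ι_one_mul, bidegProj_ι_one_mul, ← mul_smul_comm, smul_ite, smul_zero]
      congr 1
      split_ifs
      · exact ih _ _ (by omega)
      · rfl

theorem bidegProj_substNegSum_of_depth (p t : ℕ) (z : FreeAlgebra K (Fin 2))
    (hz : ∀ p' t', t' < t → bidegProj K p' t' z = 0) :
    bidegProj K p t (substNegSum K z) = (-1 : K) ^ p • bidegProj K p t z := by
  have hdepth : ∀ w ∈ ((𝔅).repr z).support, t ≤ w.toList.count 1 := by
    intro w hw
    by_contra! hlt
    have hw' := repr_bidegProj (w.toList.count 0) (w.toList.count 1) z w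
    rw [hz _ _ hlt, if_pos ⟨rfl, rfl⟩] at hw'
    exact Finsupp.mem_support_iff.mp hw (by simpa using hw'.symm)
  rw [← (𝔅).linearCombination_repr z, Finsupp.linearCombination_apply, Finsupp.sum, map_sum,
    ← coe_bidegProjₗ, map_sum, map_sum, Finset.smul_sum]
  refine Finset.sum_congr rfl fun w hw => ?_
  rw [map_smul, map_smul, map_smul, coe_bidegProjₗ,
    bidegProj_substNegSum_basisFreeMonoid w p t (hdepth w hw), smul_comm]

end FreeAlgebra

open FreeAlgebra

theorem qdiv_depth2_formula_general (K : Type*) [Field K]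
    (n k : ℕ)
    (x y : FreeAlgebra K (Fin 2)) (hx : x = FreeAlgebra.ι K 0) (hy : y = FreeAlgebra.ι K 1)
    (ψ : FreeAlgebra K (Fin 2))
    (hdepth : ∀ p t : ℕ, t < 2 * k → bidegProj K p t ψ = 0)
    (hanti : FreeAlgebra.lift K ![y, x] ψ = -ψ)
    (hhex : ψ + FreeAlgebra.lift K ![y, -x - y] ψ + FreeAlgebra.lift K ![-x - y, x] ψ = 0)
    (a b : FreeAlgebra K (Fin 2))
    (hab : a = FreeAlgebra.lift K ![-x - y, x] ψ ∧ b = FreeAlgebra.lift K ![-x - y, y] ψ)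
    (ε : FreeAlgebra K (Fin 2) →ₐ[K] K)
    (dx dy : FreeAlgebra K (Fin 2) →ₗ[K] FreeAlgebra K (Fin 2))
    (hd : ∀ z : FreeAlgebra K (Fin 2),
      z = algebraMap K (FreeAlgebra K (Fin 2)) (ε z) + dx z * x + dy z * y)
    (Rel : Submodule K (FreeAlgebra K (Fin 2))) :
    bidegProj K (2 * n - 2 * k) (2 * k) (x * dx a + y * dy b) -
      y * dy (bidegProj K (2 * n - 2 * k) (2 * k) ψ) ∈ Rel := by
  subst hx hy
  obtain ⟨ha, hb⟩ := hab
  replace hb : b = substNegSum K ψ := hb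
  have hd : IsPartialDerivs ε dx dy := hd
  have hswap : lift K ![ι K 1, -ι K 0 - ι K 1] ψ = -substNegSum K ψ := by
    rw [← map_neg, ← hanti, substNegSum, lift_lift_apply]
    congr 2
    ext i
    fin_cases i <;> simp
  replace ha : a = substNegSum K ψ - ψ := by
    rw [ha, eq_sub_iff_add_eq, ← sub_eq_zero, ← hhex, hswap]
    abel
  have hproj : bidegProj K (2 * n - 2 * k) (2 * k) (substNegSum K ψ) =
      bidegProj K (2 * n - 2 * k) (2 * k) ψ := by
    rw [bidegProj_substNegSum_of_depth _ _ ψ hdepth, ← Nat.mul_sub, pow_mul, neg_one_sq, one_pow,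
      one_smul]
  have hcomp : bidegProj K (2 * n - 2 * k) (2 * k) (ι K 0 * dx a + ι K 1 * dy b) =
      ι K 1 * dy (bidegProj K (2 * n - 2 * k) (2 * k) ψ) := by
    rw [ha, hb, map_sub, mul_sub, ← coe_bidegProjₗ, map_add, map_sub, coe_bidegProjₗ,
      hd.bidegProj_ι_zero_mul_dx, hd.bidegProj_ι_zero_mul_dx, hd.bidegProj_ι_one_mul_dy, hproj]
    abel
  rw [hcomp, sub_self]
  exact Rel.zero_mem

/-- Let `q` be a primitive `l`-th root of unity, and let `ψ` be a Lie element of weight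
`2n` (with `l ∣ 2n`) and of depth at least `2k` (`k < n`), satisfying the antisymmetry
relation `ψ(x,y) = -ψ(y,x)` and the hexagon relation
`ψ(x,y) + ψ(y,z) + ψ(z,x) = 0` for `z = -x-y`.  Let `ν(ψ) = (ψ(-x-y,x), ψ(-x-y,y))` be
the associated tangential derivation.  Then the bidegree `(2n-2k, 2k)` component of
`qdiv(ν(ψ)) = qtr(x·∂_x ψ(-x-y,x) + y·∂_y ψ(-x-y,y))` equals
`qtr(y·∂_y(ψ^{(2n-2k,2k)}))`, i.e. the difference of representatives lies in the span
`Rel` of the `q`-trace relations. -/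
theorem qdiv_depth2_formula (K : Type*) [Field K] [CharZero K]
    (l : ℕ) (hl : 1 ≤ l) (q : K) (hq : IsPrimitiveRoot q l)
    (n k : ℕ) (hk : k < n) (hdiv : l ∣ 2 * n)
    (x y : FreeAlgebra K (Fin 2)) (hx : x = FreeAlgebra.ι K 0) (hy : y = FreeAlgebra.ι K 1)
    (ψ : FreeAlgebra K (Fin 2))
    (hψLie : ψ ∈
      LieSubalgebra.lieSpan K (FreeAlgebra K (Fin 2)) (Set.range (FreeAlgebra.ι K)))
    (hweight : ∀ p t : ℕ, p + t ≠ 2 * n → bidegProj K p t ψ = 0)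
    (hdepth : ∀ p t : ℕ, t < 2 * k → bidegProj K p t ψ = 0)
    (hanti : FreeAlgebra.lift K ![y, x] ψ = -ψ)
    (hhex : ψ + FreeAlgebra.lift K ![y, -x - y] ψ + FreeAlgebra.lift K ![-x - y, x] ψ = 0)
    (a b : FreeAlgebra K (Fin 2))
    (hab : a = FreeAlgebra.lift K ![-x - y, x] ψ ∧ b = FreeAlgebra.lift K ![-x - y, y] ψ)
    (ε : FreeAlgebra K (Fin 2) →ₐ[K] K) (hεx : ε x = 0) (hεy : ε y = 0)
    (dx dy : FreeAlgebra K (Fin 2) →ₗ[K] FreeAlgebra K (Fin 2))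
    (hd : ∀ z : FreeAlgebra K (Fin 2),
      z = algebraMap K (FreeAlgebra K (Fin 2)) (ε z) + dx z * x + dy z * y)
    (Rel : Submodule K (FreeAlgebra K (Fin 2)))
    (hRel : Rel = Submodule.span K
      {z | ∃ w : FreeAlgebra K (Fin 2), ε w = 0 ∧
        (z = x * w - q • (w * x) ∨ z = y * w - q • (w * y))}) :
    bidegProj K (2 * n - 2 * k) (2 * k) (x * dx a + y * dy b) -
      y * dy (bidegProj K (2 * n - 2 * k) (2 * k) ψ) ∈ Rel :=
  qdiv_depth2_formula_general K n k x y hx hy ψ hdepth hanti hhex a b hab ε dx dy hd Rel
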